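/- arXiv:2111.12195 — 4 statements merged into one kernel-verified Lean document; each statement's English description precedes it below -/
import Mathlib

section
/- The set ℝ₊ of nonnegative real numbers with the usual multiplication and the multivalued 'triangle' sum a ∇ b = {c ∈ ℝ₊ : |a − b| ≤ c ≤ a + b} is a multifield. -/
/-- A (commutative, unital) multiring: multivalued addition, single-valued
commutative multiplication, absorbing zero, weak distributivity. -/
structure Multiring (R : Type*) where
  add : R → R → Set R
  mul : R → R → R
  neg : R → R
  zero : R
  one : R
  add_nonempty : ∀ a b, (add a b).Nonempty
  add_inv : ∀ a b c, c ∈ add a b → a ∈ add c (neg b) ∧ b ∈ add (neg a) c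
  add_zero_iff : ∀ a b, b ∈ add a zero ↔ a = b
  add_comm : ∀ a b, add a b = add b a
  add_assoc : ∀ a b c t x, x ∈ add a b → t ∈ add x c → ∃ y ∈ add b c, t ∈ add a y
  mul_assoc : ∀ a b c, mul (mul a b) c = mul a (mul b c)
  mul_comm : ∀ a b, mul a b = mul b a
  mul_one : ∀ a, mul a one = a
  mul_zero : ∀ a, mul a zero = zero
  distrib : ∀ a b c d, d ∈ add a b → mul c d ∈ add (mul c a) (mul c b)

open NNReal

/-- The triangle multivalued sum on nonnegative reals:
`a ∇ b = {c : |a - b| ≤ c ≤ a + b}`. -/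
def triAdd (a b : ℝ≥0) : Set ℝ≥0 :=
  {c | |(a : ℝ) - (b : ℝ)| ≤ (c : ℝ) ∧ (c : ℝ) ≤ (a : ℝ) + (b : ℝ)}

lemma mem_triAdd {a b c : ℝ≥0} :
    c ∈ triAdd a b ↔ |(a : ℝ) - (b : ℝ)| ≤ (c : ℝ) ∧ (c : ℝ) ≤ (a : ℝ) + (b : ℝ) :=
  Iff.rfl

/-- `ℝ₊` with the usual multiplication, identity negation and the triangle
multivalued sum is a multifield. -/
theorem triangle_multifield :
    ∃ M : Multiring ℝ≥0,
      M.zero = 0 ∧ M.one = 1 ∧ M.neg = id ∧ M.mul = (fun a b => a * b) ∧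
      M.add = triAdd ∧ M.one ≠ M.zero ∧
      ∀ a : ℝ≥0, a ≠ M.zero → ∃ b, M.mul a b = M.one := by
  refine ⟨{ add := triAdd, mul := fun a b => a * b, neg := id, zero := 0, one := 1
            add_nonempty := fun a b => ⟨a + b, ?_, ?_⟩
            add_inv := fun a b c hc => ?_
            add_zero_iff := fun a b => ?_
            add_comm := fun a b => ?_
            add_assoc := fun a b c t x hx ht => ?_
            mul_assoc := fun a b c => mul_assoc a b c
            mul_comm := fun a b => mul_comm a b
            mul_one := fun a => mul_one a
            mul_zero := fun a => mul_zero a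
            distrib := fun a b c d hd => ?_ },
         rfl, rfl, rfl, rfl, rfl, one_ne_zero, fun a ha => ⟨a⁻¹, mul_inv_cancel₀ ha⟩⟩
  · push_cast
    rw [abs_sub_le_iff]
    constructor <;> linarith [a.coe_nonneg, b.coe_nonneg]
  · push_cast; rfl
  · rw [mem_triAdd, abs_sub_le_iff] at hc
    obtain ⟨⟨h1, h2⟩, h3⟩ := hc
    simp only [id]
    constructor <;> rw [mem_triAdd, abs_sub_le_iff] <;>
      exact ⟨⟨by linarith, by linarith⟩, by linarith⟩
  · rw [mem_triAdd]
    push_cast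
    rw [abs_sub_le_iff]
    constructor
    · rintro ⟨⟨h1, h2⟩, h3⟩
      have h : (a : ℝ) = b := le_antisymm (by linarith) (by linarith)
      exact_mod_cast h
    · rintro rfl
      exact ⟨⟨by linarith, by linarith [a.coe_nonneg]⟩, by linarith⟩
  · ext c
    rw [mem_triAdd, mem_triAdd, abs_sub_comm]
    constructor <;> rintro ⟨h1, h2⟩ <;> exact ⟨h1, by linarith⟩
  · rw [mem_triAdd, abs_sub_le_iff] at hx ht
    obtain ⟨⟨h1, h2⟩, h3⟩ := hx
    obtain ⟨⟨h4, h5⟩, h6⟩ := ht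
    have ha0 := a.coe_nonneg
    have hb0 := b.coe_nonneg
    have hc0 := c.coe_nonneg
    have ht0 := t.coe_nonneg
    set Y : ℝ := max |(b : ℝ) - (c : ℝ)| |(t : ℝ) - (a : ℝ)| with hY
    have hY0 : 0 ≤ Y := le_trans (abs_nonneg _) (le_max_left _ _)
    have e1 : (b : ℝ) - c ≤ Y := le_trans (le_abs_self _) (le_max_left _ _)
    have e2 : (c : ℝ) - b ≤ Y := by
      have : (c : ℝ) - b ≤ |(b : ℝ) - c| := by rw [abs_sub_comm]; exact le_abs_self _
      exact this.trans (le_max_left _ _)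
    have e3 : (t : ℝ) - a ≤ Y := le_trans (le_abs_self _) (le_max_right _ _)
    have e4 : (a : ℝ) - t ≤ Y := by
      have : (a : ℝ) - t ≤ |(t : ℝ) - a| := by rw [abs_sub_comm]; exact le_abs_self _
      exact this.trans (le_max_right _ _)
    have eub : Y ≤ min ((b : ℝ) + c) ((a : ℝ) + t) := by
      apply max_le <;> rw [abs_sub_le_iff] <;>
        exact ⟨le_min (by linarith) (by linarith), le_min (by linarith) (by linarith)⟩
    have eub1 : Y ≤ (b : ℝ) + c := eub.trans (min_le_left _ _)
    have eub2 : Y ≤ (a : ℝ) + t := eub.trans (min_le_right _ _)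
    refine ⟨Real.toNNReal Y, ?_, ?_⟩ <;>
      rw [mem_triAdd, Real.coe_toNNReal _ hY0, abs_sub_le_iff]
    · exact ⟨⟨by linarith, by linarith⟩, by linarith⟩
    · exact ⟨⟨by linarith, by linarith⟩, by linarith⟩
  · rw [mem_triAdd] at hd ⊢
    obtain ⟨h1, h2⟩ := hd
    push_cast
    rw [← mul_sub, abs_mul, abs_of_nonneg c.coe_nonneg]
    exact ⟨mul_le_mul_of_nonneg_left h1 c.coe_nonneg, by nlinarith [c.coe_nonneg]⟩
end

section
/- For a prime p, the structure H_p = {0, 1, ..., p−1} with multiplication a·b = (ab mod p) and multivalued addition given by a+b = H_p if a = b and a,b ≠ 0; a+b = {a,b} if a ≠ b and a,b ≠ 0; a+0 = {a}; 0+b = {b}, with negation the identity map, is a multifield. -/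
/-- The `H_p` multivalued addition: `a+b = H_p` if `a = b ≠ 0`, `{a,b}` if
`a ≠ b` are both nonzero, `a+0 = {a}`, `0+b = {b}`. -/
def hAdd (p : ℕ) (a b : ZMod p) : Set (ZMod p) :=
  if a = 0 then {b} else if b = 0 then {a} else if a = b then Set.univ else {a, b}

lemma mem_hAdd {p : ℕ} {a b t : ZMod p} : t ∈ hAdd p a b ↔
    (a = 0 ∧ t = b) ∨ (b = 0 ∧ t = a) ∨ (a ≠ 0 ∧ b ≠ 0 ∧ a = b) ∨
    (a ≠ 0 ∧ b ≠ 0 ∧ a ≠ b ∧ (t = a ∨ t = b)) := by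
  unfold hAdd
  split_ifs <;> simp_all [Set.mem_insert_iff]

lemma hAdd_zero_left {p : ℕ} (b : ZMod p) : b ∈ hAdd p 0 b := by
  simp [mem_hAdd]

lemma hAdd_zero_right {p : ℕ} (a : ZMod p) : a ∈ hAdd p a 0 := by
  simp [mem_hAdd]

lemma hAdd_self_left {p : ℕ} {a b : ZMod p} (ha : a ≠ 0) (hb : b ≠ 0) :
    a ∈ hAdd p a b := by
  simp only [mem_hAdd]; by_cases h : a = b <;> tauto

lemma hAdd_self_right {p : ℕ} {a b : ZMod p} (ha : a ≠ 0) (hb : b ≠ 0) :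
    b ∈ hAdd p a b := by
  simp only [mem_hAdd]; by_cases h : a = b <;> tauto

lemma hAdd_diag {p : ℕ} {a : ZMod p} (ha : a ≠ 0) (t : ZMod p) :
    t ∈ hAdd p a a := by
  simp only [mem_hAdd]; tauto

lemma hAdd_comm' (p : ℕ) (a b : ZMod p) : hAdd p a b = hAdd p b a := by
  ext t; simp only [mem_hAdd]; tauto

lemma hAdd_nonempty (p : ℕ) (a b : ZMod p) : (hAdd p a b).Nonempty := by
  by_cases ha : a = 0
  · exact ⟨b, by rw [ha]; exact hAdd_zero_left b⟩
  by_cases hb : b = 0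
  · exact ⟨a, by rw [hb]; exact hAdd_zero_right a⟩
  exact ⟨a, hAdd_self_left ha hb⟩

lemma hAdd_inv' {p : ℕ} {a b c : ZMod p} (h : c ∈ hAdd p a b) :
    a ∈ hAdd p c b ∧ b ∈ hAdd p a c := by
  rw [mem_hAdd] at h
  rcases h with ⟨h1, h2⟩ | ⟨h1, h2⟩ | ⟨h1, h2, h3⟩ | ⟨h1, h2, h3, h4 | h4⟩
  · constructor
    · rw [h1, h2]
      by_cases hb : b = 0
      · rw [hb]; exact hAdd_zero_left 0
      · exact hAdd_diag hb 0
    · rw [h1, h2]; exact hAdd_zero_left b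
  · constructor
    · rw [h1, h2]; exact hAdd_zero_right a
    · rw [h1, h2]
      by_cases ha : a = 0
      · rw [ha]; exact hAdd_zero_left 0
      · exact hAdd_diag ha 0
  · constructor
    · rw [h3]
      by_cases hc : c = 0
      · rw [hc]; exact hAdd_zero_left b
      · exact hAdd_self_right hc h2
    · by_cases hc : c = 0
      · rw [hc, h3]; exact hAdd_zero_right b
      · rw [h3]; exact hAdd_self_left h2 hc
  · rw [h4]; exact ⟨hAdd_self_left h1 h2, hAdd_diag h1 b⟩
  · rw [h4]; exact ⟨hAdd_diag h2 a, hAdd_self_right h1 h2⟩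

lemma hAdd_assoc' {p : ℕ} {a b c t x : ZMod p} (hx : x ∈ hAdd p a b)
    (ht : t ∈ hAdd p x c) : ∃ y ∈ hAdd p b c, t ∈ hAdd p a y := by
  by_cases ha : a = 0
  · have hxb : x = b := by
      rw [mem_hAdd] at hx
      rcases hx with ⟨_, h⟩ | ⟨h1, h2⟩ | ⟨h, _⟩ | ⟨h, _⟩
      · exact h
      · exact h2.trans (ha.trans h1.symm)
      · exact absurd ha h
      · exact absurd ha h
    refine ⟨t, ?_, ?_⟩
    · rw [← hxb]; exact ht
    · rw [ha]; exact hAdd_zero_left t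
  by_cases hb : b = 0
  · have hxa : x = a := by
      rw [mem_hAdd] at hx
      rcases hx with ⟨h, _⟩ | ⟨_, h⟩ | ⟨_, h, _⟩ | ⟨_, h, _⟩
      · exact absurd h ha
      · exact h
      · exact absurd hb h
      · exact absurd hb h
    refine ⟨c, ?_, ?_⟩
    · rw [hb]; exact hAdd_zero_left c
    · rw [← hxa]; exact ht
  by_cases hc : c = 0
  · have htx : t = x := by
      rw [mem_hAdd] at ht
      rcases ht with ⟨h1, h2⟩ | ⟨_, h⟩ | ⟨_, h, _⟩ | ⟨_, h, _⟩
      · exact h2.trans (hc.trans h1.symm)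
      · exact h
      · exact absurd hc h
      · exact absurd hc h
    refine ⟨b, ?_, ?_⟩
    · rw [hc]; exact hAdd_zero_right b
    · rw [htx]; exact hx
  by_cases hab : a = b
  · refine ⟨a, ?_, ?_⟩
    · rw [hab]; exact hAdd_self_left hb hc
    · rw [hab]; exact hAdd_diag hb t
  · have hxab : x = a ∨ x = b := by
      rw [mem_hAdd] at hx
      rcases hx with ⟨h, _⟩ | ⟨h, _⟩ | ⟨_, _, h⟩ | ⟨_, _, _, h⟩
      · exact absurd h ha
      · exact absurd h hb
      · exact absurd h hab
      · exact h
    rcases hxab with h | h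
    · refine ⟨c, hAdd_self_right hb hc, ?_⟩
      rw [← h]; exact ht
    · rw [h] at ht
      by_cases hbc : b = c
      · refine ⟨a, ?_, hAdd_diag ha t⟩
        rw [← hbc]; exact hAdd_diag hb a
      · have htbc : t = b ∨ t = c := by
          rw [mem_hAdd] at ht
          rcases ht with ⟨h', _⟩ | ⟨h', _⟩ | ⟨_, _, h'⟩ | ⟨_, _, _, h'⟩
          · exact absurd h' hb
          · exact absurd h' hc
          · exact absurd h' hbc
          · exact h'
        rcases htbc with h2 | h2
        · refine ⟨t, ?_, ?_⟩
          · rw [h2]; exact hAdd_self_left hb hc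
          · rw [h2]; exact hAdd_self_right ha hb
        · refine ⟨t, ?_, ?_⟩
          · rw [h2]; exact hAdd_self_right hb hc
          · rw [h2]; exact hAdd_self_right ha hc

lemma hAdd_zero_iff' {p : ℕ} (a b : ZMod p) : b ∈ hAdd p a 0 ↔ a = b := by
  rw [mem_hAdd]
  constructor
  · rintro (⟨h1, h2⟩ | ⟨_, h⟩ | ⟨_, h, _⟩ | ⟨_, h, _⟩)
    · exact h1.trans h2.symm
    · exact h.symm
    · exact absurd rfl h
    · exact absurd rfl h
  · intro h; exact Or.inr (Or.inl ⟨rfl, h.symm⟩)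

lemma hAdd_distrib {p : ℕ} (hp : p.Prime) {a b d : ZMod p} (c : ZMod p)
    (h : d ∈ hAdd p a b) : c * d ∈ hAdd p (c * a) (c * b) := by
  haveI : Fact p.Prime := ⟨hp⟩
  by_cases hc : c = 0
  · rw [hc, zero_mul, zero_mul, zero_mul]; exact hAdd_zero_left 0
  rw [mem_hAdd] at h
  rcases h with ⟨h1, h2⟩ | ⟨h1, h2⟩ | ⟨h1, h2, h3⟩ | ⟨h1, h2, h3, h4 | h4⟩
  · rw [h1, h2, mul_zero]; exact hAdd_zero_left (c * b)
  · rw [h1, h2, mul_zero]; exact hAdd_zero_right (c * a)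
  · rw [h3]; exact hAdd_diag (mul_ne_zero hc h2) _
  · rw [h4]; exact hAdd_self_left (mul_ne_zero hc h1) (mul_ne_zero hc h2)
  · rw [h4]; exact hAdd_self_right (mul_ne_zero hc h1) (mul_ne_zero hc h2)

/-- For a prime `p`, `H_p` with multiplication mod `p`, identity negation and the
above multivalued addition is a multifield. -/
theorem hp_multifield (p : ℕ) (hp : p.Prime) :
    ∃ M : Multiring (ZMod p),
      M.zero = 0 ∧ M.one = 1 ∧ M.neg = id ∧ M.mul = (fun a b => a * b) ∧
      M.add = hAdd p ∧ M.one ≠ M.zero ∧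
      ∀ a : ZMod p, a ≠ M.zero → ∃ b, M.mul a b = M.one := by
  haveI : Fact p.Prime := ⟨hp⟩
  refine ⟨{
      add := hAdd p
      mul := fun a b => a * b
      neg := id
      zero := 0
      one := 1
      add_nonempty := hAdd_nonempty p
      add_inv := fun a b c h => hAdd_inv' h
      add_zero_iff := hAdd_zero_iff'
      add_comm := hAdd_comm' p
      add_assoc := fun a b c t x hx ht => hAdd_assoc' hx ht
      mul_assoc := mul_assoc
      mul_comm := mul_comm
      mul_one := mul_one
      mul_zero := mul_zero
      distrib := fun a b c d h => hAdd_distrib hp c h },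
    rfl, rfl, rfl, rfl, rfl, one_ne_zero,
    fun a ha => ⟨a⁻¹, mul_inv_cancel₀ ha⟩⟩
end

section
/- Let R be a superring. Then the polynomial superring R[X] is a superdomain if and only if R is a superdomain. -/
/-- A (commutative) superring: both addition and multiplication are multivalued;
`(S,+,-,0)` is a commutative multigroup, `(S,·,1)` a commutative multimonoid,
`0` is absorbing, weak distributivity and the rule of signs hold. -/
structure Superring (R : Type*) where
  add : R → R → Set R
  mul : R → R → Set R
  neg : R → R
  zero : R
  one : R
  add_nonempty : ∀ a b, (add a b).Nonempty
  mul_nonempty : ∀ a b, (mul a b).Nonempty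
  add_inv : ∀ a b c, c ∈ add a b → a ∈ add c (neg b) ∧ b ∈ add (neg a) c
  add_zero_iff : ∀ a b, b ∈ add a zero ↔ a = b
  add_comm : ∀ a b, add a b = add b a
  add_assoc : ∀ a b c t x, x ∈ add a b → t ∈ add x c → ∃ y ∈ add b c, t ∈ add a y
  mul_one : ∀ a, mul a one = {a}
  mul_comm : ∀ a b, mul a b = mul b a
  mul_assoc : ∀ a b c, (⋃ x ∈ mul a b, mul x c) = ⋃ y ∈ mul b c, mul a y
  mul_zero : ∀ a, mul a zero = {zero}
  distrib : ∀ a b c d e, e ∈ add a b → d ∈ mul c e →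
    d ∈ ⋃ u ∈ mul c a, ⋃ v ∈ mul c b, add u v
  sign_rule : ∀ a b, neg '' mul a b = mul (neg a) b ∧ neg '' mul a b = mul a (neg b)

namespace Superring

variable {R : Type*}

/-- Iterated multivalued sum of a list of subsets:
`x ∈ Σ_{i<0} = {0}`, and `x ∈ Σ A::l` iff `x ∈ y + a` for some `y ∈ Σ l`, `a ∈ A`. -/
def setSum (S : Superring R) : List (Set R) → Set R
  | [] => {S.zero}
  | A :: l => ⋃ y ∈ S.setSum l, ⋃ a ∈ A, S.add y a

/-- Eventually-zero sequences: the carrier of the polynomial superring `R[X]`. -/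
def EvZero (S : Superring R) (f : ℕ → R) : Prop := ∃ N, ∀ n, N ≤ n → f n = S.zero

/-- Addition in `R[X]`: `(cₙ) ∈ (aₙ)+(bₙ)` iff `cₙ ∈ aₙ+bₙ` for all `n`. -/
def polyAdd (S : Superring R) (f g : ℕ → R) : Set (ℕ → R) :=
  {h | ∀ n, h n ∈ S.add (f n) (g n)}

/-- Multiplication in `R[X]`: `(cₙ) ∈ (aₙ)·(bₙ)` iff `cₙ ∈ Σ_{i+j=n} aᵢ·bⱼ`. -/
def polyMul (S : Superring R) (f g : ℕ → R) : Set (ℕ → R) :=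
  {h | ∀ n, h n ∈ S.setSum (((List.range (n + 1)).map fun i => S.mul (f i) (g (n - i))))}

/-- The constant polynomial `a̲ = (a,0,0,...)`. -/
def C (S : Superring R) (a : R) : ℕ → R := fun n => if n = 0 then a else S.zero

/-- The monomial `Xⁿ`. -/
def Xpow (S : Superring R) (n : ℕ) : ℕ → R := fun k => if k = n then S.one else S.zero

end Superring

open Superring

section Aux

variable {R : Type*} (S : Superring R)

lemma Superring.add_zero_eq (a : R) : S.add a S.zero = {a} := by
  ext b; simp [S.add_zero_iff a b, eq_comm]

lemma Superring.zero_add_eq (a : R) : S.add S.zero a = {a} := by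
  rw [S.add_comm]; exact S.add_zero_eq a

lemma Superring.zero_mul' (a : R) : S.mul S.zero a = {S.zero} := by
  rw [S.mul_comm]; exact S.mul_zero a

lemma Superring.setSum_zeros (l : List (Set R)) (h : ∀ A ∈ l, A = {S.zero}) :
    S.setSum l = {S.zero} := by
  induction l with
  | nil => rfl
  | cons A l ih =>
    have hA : A = {S.zero} := h A (by simp)
    have hl := ih (fun B hB => h B (by simp [hB]))
    simp [Superring.setSum, hl, hA, S.add_zero_eq]

lemma Superring.setSum_single (l : List (Set R)) (k : ℕ) (hk : k < l.length)
    (h : ∀ i (hi : i < l.length), i ≠ k → l[i] = {S.zero}) :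
    S.setSum l = l[k] := by
  induction l generalizing k with
  | nil => exact absurd hk (by simp)
  | cons A l ih =>
    cases k with
    | zero =>
      have hl : S.setSum l = {S.zero} := S.setSum_zeros l (by
        intro B hB
        obtain ⟨i, hi, rfl⟩ := List.mem_iff_getElem.mp hB
        have := h (i + 1) (by simpa using Nat.succ_lt_succ hi) (by simp)
        simpa using this)
      simp only [Superring.setSum, hl]
      ext b
      simp [S.zero_add_eq]
    | succ k =>
      have hA : A = {S.zero} := h 0 (by simp) (by simp)
      have hk' : k < l.length := by simpa using hk
      have hrec := ih k hk' (fun i hi hik =>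
        h (i + 1) (by simpa using Nat.succ_lt_succ hi) (by omega))
      rw [show ((A :: l)[k + 1]'hk : Set R) = l[k] by simp, ← hrec]
      simp only [Superring.setSum, hA]
      ext b
      simp [S.add_zero_eq]

lemma Superring.exists_max {f : ℕ → R} (hz : S.EvZero f)
    (hne : f ≠ fun _ => S.zero) :
    ∃ d, f d ≠ S.zero ∧ ∀ m, d < m → f m = S.zero := by
  classical
  obtain ⟨N, hN⟩ := hz
  have hex : ∃ n, f n ≠ S.zero := by
    by_contra h; push_neg at h; exact hne (funext h)
  obtain ⟨n, hn⟩ := hex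
  have hnN : n ≤ N := by
    by_contra h; push_neg at h; exact hn (hN n h.le)
  refine ⟨Nat.findGreatest (fun n => f n ≠ S.zero) N,
    Nat.findGreatest_spec (P := fun n => f n ≠ S.zero) hnN hn, ?_⟩
  intro m hm
  by_cases hmN : m ≤ N
  · by_contra hfm
    exact Nat.findGreatest_is_greatest hm hmN hfm
  · exact hN m (by omega)

end Aux

/-- `R[X]` is a superdomain iff `R` is a superdomain: `R` is nontrivial with
`0 ∈ a·b ↔ a = 0 ∨ b = 0` iff the polynomial superring has the same properties. -/
theorem polynomial_superdomain_iff {R : Type*} (S : Superring R) :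
    (S.one ≠ S.zero ∧ ∀ a b : R, S.zero ∈ S.mul a b ↔ a = S.zero ∨ b = S.zero) ↔
    (S.C S.one ≠ S.C S.zero ∧
      ∀ f g : ℕ → R, S.EvZero f → S.EvZero g →
        ((fun _ => S.zero) ∈ S.polyMul f g ↔
          f = (fun _ => S.zero) ∨ g = (fun _ => S.zero))) := by
  constructor
  · rintro ⟨h1, h2⟩
    constructor
    · intro hC
      have := congrFun hC 0
      simp [Superring.C] at this
      exact h1 this
    · intro f g hf hg
      constructor
      · intro hmul
        by_contra hcon
        push_neg at hcon
        obtain ⟨hf0, hg0⟩ := hcon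
        obtain ⟨d, hd, hd'⟩ := S.exists_max hf hf0
        obtain ⟨e, he, he'⟩ := S.exists_max hg hg0
        set n := d + e with hn
        have hmem := hmul n
        have hlen : ((List.range (n + 1)).map fun i => S.mul (f i) (g (n - i))).length
            = n + 1 := by simp
        have hdn : d < n + 1 := by omega
        have hsum : S.setSum ((List.range (n + 1)).map fun i => S.mul (f i) (g (n - i)))
            = S.mul (f d) (g e) := by
          rw [S.setSum_single _ d (by omega)]
          · simp only [List.getElem_map, List.getElem_range]
            rw [show n - d = e by omega]
          · intro i hi hik
            simp only [List.getElem_map, List.getElem_range]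
            have hi' : i < n + 1 := by simpa using hi
            rcases lt_or_gt_of_ne hik with hlt | hgt
            · rw [he' (n - i) (by omega), S.mul_zero]
            · rw [hd' i hgt, S.zero_mul']
        rw [hsum] at hmem
        rcases (h2 (f d) (g e)).mp hmem with h | h
        · exact hd h
        · exact he h
      · intro h n
        have hall : S.setSum ((List.range (n + 1)).map fun i => S.mul (f i) (g (n - i)))
            = {S.zero} := by
          apply S.setSum_zeros
          intro A hA
          obtain ⟨i, hi, rfl⟩ := List.mem_map.mp hA
          rcases h with h | h
          · rw [show f i = S.zero from congrFun h i, S.zero_mul']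
          · rw [show g (n - i) = S.zero from congrFun h (n - i), S.mul_zero]
        rw [hall]; rfl
  · rintro ⟨h1, h2⟩
    have hCz : ∀ a : R, S.EvZero (S.C a) := by
      intro a
      exact ⟨1, fun n hn => by simp [Superring.C]; omega⟩
    have hCeq : ∀ a : R, S.C a = (fun _ => S.zero) ↔ a = S.zero := by
      intro a
      constructor
      · intro h
        have := congrFun h 0
        simpa [Superring.C] using this
      · intro h
        funext n
        simp [Superring.C, h]
    constructor
    · intro h
      apply h1
      funext n
      simp [Superring.C, h]
    · intro a b
      have key := h2 (S.C a) (S.C b) (hCz a) (hCz b)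
      have hmemiff : (fun _ => S.zero) ∈ S.polyMul (S.C a) (S.C b) ↔ S.zero ∈ S.mul a b := by
        constructor
        · intro h
          have h0 := h 0
          rw [S.setSum_single _ 0 (by simp)] at h0
          · simpa [Superring.C] using h0
          · intro i hi hik
            simp at hi
            omega
        · intro h n
          show S.zero ∈ S.setSum ((List.range (n + 1)).map fun i =>
            S.mul (S.C a i) (S.C b (n - i)))
          cases n with
          | zero =>
            rw [S.setSum_single _ 0 (by simp)]
            · simpa [Superring.C] using h
            · intro i hi hik
              simp at hi
              omega
          | succ m =>
            rw [S.setSum_zeros]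
            · rfl
            · intro A hA
              obtain ⟨i, hi, rfl⟩ := List.mem_map.mp hA
              cases i with
              | zero =>
                rw [show S.C b (m + 1 - 0) = S.zero by simp [Superring.C], S.mul_zero]
              | succ j =>
                rw [show S.C a (j + 1) = S.zero by simp [Superring.C], S.zero_mul']
      rw [hmemiff] at key
      rw [key, hCeq a, hCeq b]
end

section
/- Euclid's Division Algorithm for multipolynomials: Let K be a multifield (hyperfield). Given polynomials a, b ∈ K[X] with b ≠ 0, there exist q, r ∈ K[X] such that a ∈ q·b + r (as element of the set of products/sums in the superring K[X]), with deg r < deg b or r = 0. -/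
namespace Multiring

variable {R : Type*}

/-- Iterated multivalued sum of a list of elements: `Σ [] = {0}`, and
`x ∈ Σ (a :: l)` iff `x ∈ y + a` for some `y ∈ Σ l`. -/
def listSum (M : Multiring R) : List R → Set R
  | [] => {M.zero}
  | a :: l => ⋃ y ∈ M.listSum l, M.add y a

/-- Eventually-zero sequences: the carrier of the polynomial superring `R[X]`. -/
def EvZero (M : Multiring R) (f : ℕ → R) : Prop := ∃ N, ∀ n, N ≤ n → f n = M.zero

/-- Addition in `R[X]`: `(cₙ) ∈ (aₙ)+(bₙ)` iff `cₙ ∈ aₙ+bₙ` for all `n`. -/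
def polyAdd (M : Multiring R) (f g : ℕ → R) : Set (ℕ → R) :=
  {h | ∀ n, h n ∈ M.add (f n) (g n)}

/-- Multiplication in `R[X]`: `(cₙ) ∈ (aₙ)·(bₙ)` iff `cₙ ∈ Σ_{i+j=n} aᵢ·bⱼ`. -/
def polyMul (M : Multiring R) (f g : ℕ → R) : Set (ℕ → R) :=
  {h | ∀ n, h n ∈ M.listSum ((List.range (n + 1)).map fun i => M.mul (f i) (g (n - i)))}

/-- The degree of an eventually-zero sequence: the smallest `t` with
`f n = 0` for all `n ≥ t`. -/
noncomputable def deg (M : Multiring R) (f : ℕ → R) : ℕ :=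
  sInf {t : ℕ | ∀ n, t ≤ n → f n = M.zero}

end Multiring

namespace Multiring

variable {R : Type*} (M : Multiring R)

lemma mem_listSum_cons {x a : R} {l : List R} :
    x ∈ M.listSum (a :: l) ↔ ∃ y ∈ M.listSum l, x ∈ M.add y a := by
  simp [listSum]

lemma zero_mem_add_zero : M.zero ∈ M.add M.zero M.zero :=
  (M.add_zero_iff _ _).mpr rfl

lemma neg_neg' (x : R) : M.neg (M.neg x) = x := by
  have h1 : x ∈ M.add x M.zero := (M.add_zero_iff x x).mpr rfl
  obtain ⟨_, h2⟩ := M.add_inv x M.zero x h1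
  obtain ⟨_, h4⟩ := M.add_inv (M.neg x) x M.zero h2
  exact (M.add_zero_iff _ _).mp h4

lemma exists_add_solution (w x : R) : ∃ y, x ∈ M.add w y := by
  obtain ⟨y, hy⟩ := M.add_nonempty (M.neg w) x
  obtain ⟨_, h⟩ := M.add_inv (M.neg w) x y hy
  refine ⟨y, ?_⟩
  rwa [M.neg_neg'] at h

lemma assoc' {u v w r x : R} (h1 : x ∈ M.add u v) (h2 : v ∈ M.add w r) :
    ∃ y ∈ M.add u w, x ∈ M.add y r := by
  rw [M.add_comm] at h1 h2
  obtain ⟨z, hz, hx⟩ := M.add_assoc r w u x v h2 h1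
  rw [M.add_comm] at hz hx
  exact ⟨z, hz, hx⟩

lemma listSum_set_zero (L : List R) : ∀ (p : ℕ) (w m' s : R),
    L[p]? = some M.zero → m' ∈ M.listSum L → s ∈ M.add w m' →
    s ∈ M.listSum (L.set p w) := by
  induction L with
  | nil => simp
  | cons a l ih =>
    intro p w m' s hp hm' hs
    rw [mem_listSum_cons] at hm'
    obtain ⟨y, hy, hm'⟩ := hm'
    cases p with
    | zero =>
      simp only [List.getElem?_cons_zero, Option.some.injEq] at hp
      subst hp
      have : y = m' := (M.add_zero_iff _ _).mp hm'
      subst this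
      rw [List.set, mem_listSum_cons]
      exact ⟨y, hy, by rwa [M.add_comm] at hs⟩
    | succ p =>
      simp only [List.getElem?_cons_succ] at hp
      rw [M.add_comm] at hm'
      rw [M.add_comm] at hs
      obtain ⟨z, hz, hsz⟩ := M.add_assoc a y w s m' hm' hs
      rw [M.add_comm] at hz
      have hz' := ih p w y z hp hy hz
      rw [List.set, mem_listSum_cons]
      exact ⟨z, hz', by rwa [M.add_comm] at hsz⟩

lemma zero_mem_listSum (L : List R) (h : ∀ x ∈ L, x = M.zero) :
    M.zero ∈ M.listSum L := by
  induction L with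
  | nil => simp [listSum]
  | cons a l ih =>
    rw [mem_listSum_cons]
    refine ⟨M.zero, ih fun x hx => h x (List.mem_cons_of_mem _ hx), ?_⟩
    rw [h a (List.mem_cons_self (a := a) (l := l))]
    exact M.zero_mem_add_zero

lemma zero_mul (x : R) : M.mul M.zero x = M.zero := by
  rw [M.mul_comm]; exact M.mul_zero x

lemma deg_le {f : ℕ → R} {N : ℕ} (h : ∀ n, N ≤ n → f n = M.zero) : M.deg f ≤ N :=
  Nat.sInf_le h

lemma apply_deg_le {f : ℕ → R} (hf : M.EvZero f) {n : ℕ} (h : M.deg f ≤ n) :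
    f n = M.zero := by
  obtain ⟨N, hN⟩ := hf
  have := Nat.sInf_mem (s := {t : ℕ | ∀ n, t ≤ n → f n = M.zero}) ⟨N, hN⟩
  exact this n h

lemma deg_top {f : ℕ → R} (hf : M.EvZero f) (h0 : f ≠ fun _ => M.zero) :
    1 ≤ M.deg f ∧ f (M.deg f - 1) ≠ M.zero := by
  have hj : ∃ j, f j ≠ M.zero := by
    by_contra h
    push_neg at h
    exact h0 (funext h)
  obtain ⟨j, hj⟩ := hj
  have h1 : j < M.deg f := by
    by_contra h
    push_neg at h
    exact hj (M.apply_deg_le hf h)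
  constructor
  · omega
  · intro htop
    have : M.deg f ≤ M.deg f - 1 := M.deg_le fun n hn => by
      rcases eq_or_lt_of_le hn with h | h
      · rw [← h]; exact htop
      · exact M.apply_deg_le hf (by omega)
    omega


lemma key (M : Multiring R)
    (hinv : ∀ a : R, a ≠ M.zero → ∃ c, M.mul a c = M.one)
    (b : ℕ → R) (hb : M.EvZero b) (hb0 : b ≠ fun _ => M.zero) :
    ∀ N (a : ℕ → R), M.EvZero a → M.deg a ≤ N →
      ∃ q r : ℕ → R, M.EvZero q ∧ M.EvZero r ∧
        (∃ m ∈ M.polyMul q b, a ∈ M.polyAdd m r) ∧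
        (M.deg r < M.deg b ∨ r = fun _ => M.zero) ∧
        (∀ i, M.deg a < M.deg b + i → q i = M.zero) := by
  obtain ⟨hD, hbtop⟩ := M.deg_top hb hb0
  have base : ∀ a : ℕ → R, M.EvZero a → M.deg a < M.deg b →
      ∃ q r : ℕ → R, M.EvZero q ∧ M.EvZero r ∧
        (∃ m ∈ M.polyMul q b, a ∈ M.polyAdd m r) ∧
        (M.deg r < M.deg b ∨ r = fun _ => M.zero) ∧
        (∀ i, M.deg a < M.deg b + i → q i = M.zero) := by
    intro a ha hlt
    refine ⟨fun _ => M.zero, a, ⟨0, fun _ _ => rfl⟩, ha,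
      ⟨fun _ => M.zero, ?_, ?_⟩, Or.inl hlt, fun i _ => rfl⟩
    · simp only [polyMul, Set.mem_setOf_eq]
      intro k
      apply M.zero_mem_listSum
      intro x hx
      simp only [List.mem_map] at hx
      obtain ⟨i, _, rfl⟩ := hx
      exact M.zero_mul _
    · simp only [polyAdd, Set.mem_setOf_eq]
      intro k
      have h := (M.add_zero_iff (a k) (a k)).mpr rfl
      rwa [M.add_comm] at h
  intro N
  induction N with
  | zero =>
    intro a ha hdega
    exact base a ha (by omega)
  | succ N ih =>
    intro a ha hdega
    by_cases hlt : M.deg a < M.deg b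
    · exact base a ha hlt
    push_neg at hlt
    set A := M.deg a with hA
    set D := M.deg b with hDdef
    have ha1 : 1 ≤ A := le_trans hD hlt
    have hatop : a (A - 1) ≠ M.zero := by
      have hne : a ≠ fun _ => M.zero := by
        intro h
        have h0 : M.deg a ≤ 0 := M.deg_le fun k _ => by rw [h]
        omega
      exact (M.deg_top ha hne).2
    obtain ⟨binv, hbinv⟩ := hinv (b (D - 1)) hbtop
    set n := A - 1 with hn
    set d := D - 1 with hd
    set e := A - D with he
    set c := M.mul (a n) binv with hc
    have hcb : M.mul c (b d) = a n := by
      rw [hc, M.mul_assoc, M.mul_comm binv (b d), hbinv, M.mul_one]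
    set m : ℕ → R := fun k => if e ≤ k then M.mul c (b (k - e)) else M.zero with hm
    have hma : ∀ k, n ≤ k → m k = a k := by
      intro k hk
      rcases eq_or_lt_of_le hk with h | h
      · simp only [hm]
        rw [if_pos (by omega), ← h]
        have hne : n - e = d := by omega
        rw [hne, hcb]
      · have h1 : a k = M.zero := M.apply_deg_le ha (by omega)
        have h2 : b (k - e) = M.zero := M.apply_deg_le hb (by omega)
        simp only [hm]
        rw [if_pos (by omega), h2, M.mul_zero, h1]
    set a' : ℕ → R := fun k =>
      if n ≤ k then M.zero else (M.exists_add_solution (m k) (a k)).choose with ha'def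
    have haa' : ∀ k, a k ∈ M.add (m k) (a' k) := by
      intro k
      simp only [ha'def]
      by_cases hk : n ≤ k
      · rw [if_pos hk, hma k hk]
        exact (M.add_zero_iff _ _).mpr rfl
      · rw [if_neg hk]
        exact (M.exists_add_solution (m k) (a k)).choose_spec
    have ha' : M.EvZero a' := ⟨n, fun k hk => by simp only [ha'def, if_pos hk]⟩
    have hdega' : M.deg a' ≤ n := M.deg_le fun k hk => by simp only [ha'def, if_pos hk]
    obtain ⟨q', r, hq', hr, ⟨m', hm'mul, ha'm'⟩, hrdeg, hclause'⟩ := ih a' ha' (by omega)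
    have hq'e : q' e = M.zero := hclause' e (by omega)
    set q : ℕ → R := fun i => if i = e then c else q' i with hqdef
    simp only [polyAdd, Set.mem_setOf_eq] at ha'm'
    simp only [polyMul, Set.mem_setOf_eq] at hm'mul
    have hchoice : ∀ k, ∃ y, y ∈ M.add (m k) (m' k) ∧ a k ∈ M.add y (r k) := by
      intro k
      obtain ⟨y, h1, h2⟩ := M.assoc' (haa' k) (ha'm' k)
      exact ⟨y, h1, h2⟩
    have hclauseq : ∀ i, A < D + i → q i = M.zero := by
      intro i hi
      simp only [hqdef]
      rw [if_neg (by omega)]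
      exact hclause' i (by omega)
    refine ⟨q, r, ⟨A + 1, fun i hi => hclauseq i (by omega)⟩, hr,
      ⟨fun k => (hchoice k).choose, ?_, ?_⟩, hrdeg, hclauseq⟩
    · simp only [polyMul, Set.mem_setOf_eq]
      intro k
      have hmf1 := (hchoice k).choose_spec.1
      by_cases hke : e ≤ k
      · have hset : ((List.range (k+1)).map fun i => M.mul (q i) (b (k - i)))
            = (((List.range (k+1)).map fun i => M.mul (q' i) (b (k - i))).set e (m k)) := by
          apply List.ext_getElem
          · simp
          · intro i h1 h2
            rw [List.getElem_set]
            simp only [List.getElem_map, List.getElem_range]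
            by_cases hie : e = i
            · subst hie
              simp [hqdef, hm, hke]
            · rw [if_neg hie]
              simp only [hqdef]
              rw [if_neg (show ¬ i = e from fun h => hie h.symm)]
        rw [hset]
        have hlen : e < ((List.range (k+1)).map fun i => M.mul (q' i) (b (k - i))).length := by
          simp; omega
        have hget : ((List.range (k+1)).map fun i => M.mul (q' i) (b (k - i)))[e]?
            = some M.zero := by
          rw [List.getElem?_eq_getElem hlen]
          simp only [List.getElem_map, List.getElem_range]
          rw [hq'e, M.zero_mul]
        exact M.listSum_set_zero _ e _ _ _ hget (hm'mul k) hmf1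
      · have hLeq : ((List.range (k+1)).map fun i => M.mul (q i) (b (k - i)))
            = ((List.range (k+1)).map fun i => M.mul (q' i) (b (k - i))) := by
          apply List.map_congr_left
          intro i hi
          rw [List.mem_range] at hi
          simp only [hqdef]
          rw [if_neg (by omega)]
        rw [hLeq]
        have hmk0 : m k = M.zero := by simp only [hm]; rw [if_neg hke]
        set y := (hchoice k).choose with hy
        clear_value y
        rw [hmk0, M.add_comm] at hmf1
        rw [← (M.add_zero_iff _ _).mp hmf1]
        exact hm'mul k
    · simp only [polyAdd, Set.mem_setOf_eq]
      exact fun k => (hchoice k).choose_spec.2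

end Multiring

/-- Euclid's division algorithm in `K[X]` over a multifield `K`: for `a, b` with
`b ≠ 0` there are `q, r` with `a ∈ q·b + r` and `deg r < deg b` or `r = 0`. -/
theorem euclid_division {K : Type*} (M : Multiring K)
    (hnt : M.one ≠ M.zero) (hinv : ∀ a : K, a ≠ M.zero → ∃ b, M.mul a b = M.one)
    (a b : ℕ → K) (ha : M.EvZero a) (hb : M.EvZero b)
    (hb0 : b ≠ fun _ => M.zero) :
    ∃ q r : ℕ → K, M.EvZero q ∧ M.EvZero r ∧
      (∃ m ∈ M.polyMul q b, a ∈ M.polyAdd m r) ∧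
      (M.deg r < M.deg b ∨ r = fun _ => M.zero) := by
  obtain ⟨q, r, hq, hr, hm, hd, -⟩ := M.key hinv b hb hb0 (M.deg a) a ha le_rfl
  exact ⟨q, r, hq, hr, hm, hd⟩
end
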